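/- Assume β ∈ [0,1] and M > 10. There exists a constant C > 0 (depending only on β and M) such that for all ω₁ > 1 one has C′²³⁴(ω₁) ≤ C · ω₁^{2β − 3/2 − M/2}. -/

import Mathlib

open MeasureTheory Real

noncomputable section

/-- Japanese bracket ⟨ω⟩ = (1 + ω²)^{1/2}. -/
def jb (ω : ℝ) : ℝ := Real.sqrt (1 + ω ^ 2)

/-- n⁰¹(ω) = ⟨ω⟩^{-M/2}. -/
def n01 (M : ℝ) (ω : ℝ) : ℝ := jb ω ^ (-(M / 2))

/-- The operator C₂₁²³⁴, with ω₂ = ω₃ + ω₄ − ω₁. -/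
def C21op (β : ℝ) (k l m : ℝ → ℝ) (ω₁ : ℝ) : ℝ :=
  64 * π ^ 3 * ω₁ ^ (β - 1/2) *
    ∫ ω₃ in (0:ℝ)..(ω₁ / 2), ∫ ω₄ in (ω₁ - ω₃)..ω₁,
      (ω₃ + ω₄ - ω₁) ^ (β + 1/2) * ω₃ ^ β * ω₄ ^ β *
        (k (ω₃ + ω₄ - ω₁) * l ω₃ * m ω₄)

/-- The operator C₂₂²³⁴, with ω₂ = ω₃ + ω₄ − ω₁. -/
def C22op (β : ℝ) (k l m : ℝ → ℝ) (ω₁ : ℝ) : ℝ :=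
  64 * π ^ 3 * ω₁ ^ (β - 1/2) *
    ∫ ω₃ in (ω₁ / 2)..ω₁, ∫ ω₄ in ω₃..ω₁,
      (ω₃ + ω₄ - ω₁) ^ (β + 1/2) * ω₃ ^ β * ω₄ ^ β *
        (k (ω₃ + ω₄ - ω₁) * l ω₃ * m ω₄)

/-- The operator C₃²³⁴, with ω₂ = ω₃ + ω₄ − ω₁. -/
def C3op (β : ℝ) (k l m : ℝ → ℝ) (ω₁ : ℝ) : ℝ :=
  64 * π ^ 3 * ω₁ ^ (β - 1/2) *
    ∫ ω₃ in (0:ℝ)..ω₁, ∫ ω₄ in Set.Ioi ω₁,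
      (ω₃ + ω₄ - ω₁) ^ β * ω₃ ^ (β + 1/2) * ω₄ ^ β *
        (k (ω₃ + ω₄ - ω₁) * l ω₃ * m ω₄)

/-- The operator C₁²³⁴, with ω₂ = ω₃ + ω₄ − ω₁. -/
def C1op (β : ℝ) (k l m : ℝ → ℝ) (ω₁ : ℝ) : ℝ :=
  64 * π ^ 3 * ω₁ ^ β *
    ∫ ω₃ in Set.Ioi ω₁, ∫ ω₄ in Set.Ioi ω₃,
      (ω₃ + ω₄ - ω₁) ^ β * ω₃ ^ β * ω₄ ^ β *
        (k (ω₃ + ω₄ - ω₁) * l ω₃ * m ω₄)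

/-- The full domain of integration {0 ≤ ω₃ ≤ ω₄, ω₃ + ω₄ ≥ ω₁} ⊂ ℝ². -/
def Dom (ω₁ : ℝ) : Set (ℝ × ℝ) := {p | 0 ≤ p.1 ∧ p.1 ≤ p.2 ∧ ω₁ ≤ p.1 + p.2}

/-- The cross-section factor min{√ω₁, √ω₂, √ω₃}, with ω₂ = ω₃ + ω₄ − ω₁,
where p = (ω₃, ω₄). -/
def crossMin (ω₁ : ℝ) (p : ℝ × ℝ) : ℝ :=
  min (Real.sqrt ω₁) (min (Real.sqrt (p.1 + p.2 - ω₁)) (Real.sqrt p.1))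

/-- The operator C^{j₁j₂j₃}[k,l,m](ω₁) where the factor is k(ω_{j₁}) l(ω_{j₂}) m(ω_{j₃}),
with ω₂ = ω₃ + ω₄ − ω₁ and p = (ω₃, ω₄); here the selection of frequencies is passed
as a function `sel : (ℝ × ℝ) → ℝ × ℝ × ℝ` giving (ω_{j₁}, ω_{j₂}, ω_{j₃}). -/
def Cfull (β : ℝ) (k l m : ℝ → ℝ) (sel : ℝ → ℝ × ℝ → ℝ × ℝ × ℝ) (ω₁ : ℝ) : ℝ :=
  64 * π ^ 3 * ω₁ ^ (β - 1/2) *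
    ∫ p in Dom ω₁,
      ((p.1 + p.2 - ω₁) * p.1 * p.2) ^ β * crossMin ω₁ p *
        (k (sel ω₁ p).1 * l (sel ω₁ p).2.1 * m (sel ω₁ p).2.2)

/-- C²³⁴[k,l,m](ω₁): integrand k(ω₂) l(ω₃) m(ω₄). -/
def C234 (β : ℝ) (k l m : ℝ → ℝ) : ℝ → ℝ :=
  Cfull β k l m (fun ω₁ p => (p.1 + p.2 - ω₁, p.1, p.2))

/-- C¹²⁴[k,l,m](ω₁): integrand k(ω₁) l(ω₂) m(ω₄). -/
def C124 (β : ℝ) (k l m : ℝ → ℝ) : ℝ → ℝ :=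
  Cfull β k l m (fun ω₁ p => (ω₁, p.1 + p.2 - ω₁, p.2))

/-- C¹³⁴[k,l,m](ω₁): integrand k(ω₁) l(ω₃) m(ω₄). -/
def C134 (β : ℝ) (k l m : ℝ → ℝ) : ℝ → ℝ :=
  Cfull β k l m (fun ω₁ p => (ω₁, p.1, p.2))

/-- C¹²³[k,l,m](ω₁): integrand k(ω₁) l(ω₂) m(ω₃). -/
def C123 (β : ℝ) (k l m : ℝ → ℝ) : ℝ → ℝ :=
  Cfull β k l m (fun ω₁ p => (ω₁, p.1 + p.2 - ω₁, p.1))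

/-- The operator C′²³⁴(ω₁), i.e. C²³⁴ with the extra cross-section factor
|⟨ω₁⟩^{M/2} − ⟨ω₄⟩^{M/2}|/⟨ω₁⟩^{M/2}, evaluated on ⟨·⟩^{-M/2} in each slot. -/
def Cprime234 (β M : ℝ) (ω₁ : ℝ) : ℝ :=
  64 * π ^ 3 * ω₁ ^ (β - 1/2) *
    ∫ p in Dom ω₁,
      ((p.1 + p.2 - ω₁) * p.1 * p.2) ^ β * crossMin ω₁ p *
        (|jb ω₁ ^ (M / 2) - jb p.2 ^ (M / 2)| /
          (jb ω₁ ^ (M / 2) * jb (p.1 + p.2 - ω₁) ^ (M / 2) *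
            jb p.1 ^ (M / 2) * jb p.2 ^ (M / 2)))

/-! Write ω₂ = ω₃ + ω₄ − ω₁. On the domain ω₄ ≥ ω₁/2, and
|⟨ω₁⟩^{M/2} − ⟨ω₄⟩^{M/2}| / (⟨ω₁⟩^{M/2}⟨ω₄⟩^{M/2}) = |⟨ω₁⟩^{-M/2} − ⟨ω₄⟩^{-M/2}|, which by the mean
value theorem on [ω₁/2, ∞) is at most (M/2)(ω₁/2)^{-M/2-1}|ω₃ − ω₂| ≤ (M/2)(ω₁/2)^{-M/2-1}(1+ω₃)(1+ω₂).
Together with ω₄ ≤ ω₁(1 + ω₂) and min{√ω₁, √ω₂, √ω₃} ≤ √ω₃, the integrand is at most a multiple of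
ω₁^{β−1−M/2} (1+ω₃)³⟨ω₃⟩^{-M/2} (1+ω₂)³⟨ω₂⟩^{-M/2} ≲ ω₁^{β−1−M/2} (1+ω₃²)⁻¹(1+ω₂²)⁻¹, using M ≥ 10.
After the shear (ω₃, ω₄) ↦ (ω₃, ω₂) this majorant integrates to π² over the plane, whatever ω₁ is. -/

section Shear

variable {G : Type*} [MeasurableSpace G] [AddGroup G] [MeasurableAdd₂ G]
  {μ ν : Measure G} [SFinite μ] [SFinite ν] [ν.IsAddLeftInvariant] {f g : G → ℝ}

theorem MeasureTheory.Integrable.mul_comp_add_prod (hf : Integrable f μ) (hg : Integrable g ν) :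
    Integrable (fun z : G × G => f z.1 * g (z.1 + z.2)) (μ.prod ν) :=
  ((measurePreserving_prod_add μ ν).integrable_comp
    (hf.mul_prod hg).aestronglyMeasurable).mpr (hf.mul_prod hg)

theorem integral_mul_comp_add_prod [MeasurableNeg G] :
    ∫ z : G × G, f z.1 * g (z.1 + z.2) ∂(μ.prod ν) = (∫ x, f x ∂μ) * ∫ y, g y ∂ν := by
  rw [← integral_prod_mul]
  exact (measurePreserving_prod_add μ ν).integral_comp
    (MeasurableEquiv.shearAddRight G).measurableEmbedding (fun z => f z.1 * g z.2)

end Shear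

lemma jb_pos (t : ℝ) : 0 < jb t := Real.sqrt_pos.2 (by positivity)

lemma one_le_jb (t : ℝ) : 1 ≤ jb t := Real.one_le_sqrt.2 (by nlinarith)

lemma jb_sq (t : ℝ) : jb t ^ 2 = 1 + t ^ 2 := Real.sq_sqrt (by positivity)

lemma le_jb (t : ℝ) : t ≤ jb t := (le_abs_self t).trans (Real.abs_le_sqrt (by linarith))

lemma hasDerivAt_jb (t : ℝ) : HasDerivAt jb (t / jb t) t := by
  have := ((hasDerivAt_pow 2 t).const_add 1).sqrt (by positivity)
  convert this using 1
  · rfl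
  · simp only [jb]; field_simp; ring

lemma abs_jb_rpow_neg_sub_le {k a s t : ℝ} (hk : 0 ≤ k) (ha : 0 < a) (hs : a ≤ s) (ht : a ≤ t) :
    |jb s ^ (-k) - jb t ^ (-k)| ≤ k * a ^ (-(k + 1)) * |s - t| := by
  have hderiv : ∀ y ∈ Set.Ici a, HasDerivWithinAt (fun y => jb y ^ (-k))
      (y / jb y * (-k) * jb y ^ (-k - 1)) (Set.Ici a) y := fun y _ =>
    ((hasDerivAt_jb y).rpow_const (Or.inl (jb_pos y).ne')).hasDerivWithinAt
  have hbound : ∀ y ∈ Set.Ici a, ‖y / jb y * (-k) * jb y ^ (-k - 1)‖ ≤ k * a ^ (-(k + 1)) := by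
    intro y (hy : a ≤ y)
    have hy_le : y / jb y ≤ 1 := div_le_one_of_le₀ (le_jb y) (jb_pos y).le
    have hdecay : jb y ^ (-k - 1) ≤ a ^ (-(k + 1)) := by
      rw [show -k - 1 = -(k + 1) by ring]
      exact Real.rpow_le_rpow_of_nonpos ha (hy.trans (le_jb y)) (by linarith)
    have hy0 : 0 ≤ y / jb y := div_nonneg (ha.le.trans hy) (jb_pos y).le
    have hkJ : 0 ≤ k * jb y ^ (-k - 1) := mul_nonneg hk (Real.rpow_nonneg (jb_pos y).le _)
    calc ‖y / jb y * -k * jb y ^ (-k - 1)‖ = y / jb y * (k * jb y ^ (-k - 1)) := by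
          rw [show y / jb y * -k * jb y ^ (-k - 1) = -(y / jb y * (k * jb y ^ (-k - 1))) by ring,
            norm_neg, Real.norm_of_nonneg (mul_nonneg hy0 hkJ)]
      _ ≤ 1 * (k * a ^ (-(k + 1))) := by gcongr
      _ = k * a ^ (-(k + 1)) := one_mul _
  simpa only [Real.norm_eq_abs] using
    (convex_Ici a).norm_image_sub_le_of_norm_hasDerivWithin_le hderiv hbound ht hs

lemma rpow_le_one_add {t β : ℝ} (ht : 0 ≤ t) (hβ0 : 0 ≤ β) (hβ1 : β ≤ 1) : t ^ β ≤ 1 + t := by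
  have := rpow_one_add_le_one_add_mul_self (s := t - 1) (by linarith) hβ0 hβ1
  rw [add_sub_cancel] at this
  nlinarith

lemma one_add_pow_three_mul_jb_rpow_neg_le {s t : ℝ} (ht : 0 ≤ t) (hs : 5 ≤ s) :
    (1 + t) ^ 3 * jb t ^ (-s) ≤ 3 * (1 + t ^ 2)⁻¹ := by
  rw [Real.rpow_neg (jb_pos t).le, ← div_eq_mul_inv, div_le_iff₀ (Real.rpow_pos_of_pos (jb_pos t) s)]
  have hJ := one_le_jb t
  have hsq : (1 + t) ^ 2 ≤ 2 * jb t ^ 2 := by rw [jb_sq]; nlinarith [sq_nonneg (1 - t)]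
  have hlin : 1 + t ≤ 3 / 2 * jb t := by nlinarith
  have hcube : (1 + t) ^ 3 ≤ 3 * jb t ^ 3 := by nlinarith
  have hpow : jb t ^ 5 ≤ jb t ^ s := by
    exact_mod_cast Real.rpow_le_rpow_of_exponent_le hJ hs
  calc (1 + t) ^ 3 ≤ 3 * jb t ^ 3 := hcube
    _ = 3 * (jb t ^ 2)⁻¹ * jb t ^ 5 := by field_simp
    _ ≤ 3 * (1 + t ^ 2)⁻¹ * jb t ^ s := by rw [jb_sq]; gcongr

lemma jb_rpow_pos (t k : ℝ) : 0 < jb t ^ k := Real.rpow_pos_of_pos (jb_pos t) k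

def cprime234Integrand (β M ω₁ : ℝ) (p : ℝ × ℝ) : ℝ :=
  ((p.1 + p.2 - ω₁) * p.1 * p.2) ^ β * crossMin ω₁ p *
    (|jb ω₁ ^ (M / 2) - jb p.2 ^ (M / 2)| /
      (jb ω₁ ^ (M / 2) * jb (p.1 + p.2 - ω₁) ^ (M / 2) * jb p.1 ^ (M / 2) * jb p.2 ^ (M / 2)))

lemma Cprime234_eq_integral (β M ω₁ : ℝ) :
    Cprime234 β M ω₁ = 64 * π ^ 3 * ω₁ ^ (β - 1/2) * ∫ p in Dom ω₁, cprime234Integrand β M ω₁ p :=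
  rfl

lemma crossMin_nonneg (ω₁ : ℝ) (p : ℝ × ℝ) : 0 ≤ crossMin ω₁ p :=
  le_min (Real.sqrt_nonneg _) (le_min (Real.sqrt_nonneg _) (Real.sqrt_nonneg _))

lemma crossMin_le_sqrt_fst (ω₁ : ℝ) (p : ℝ × ℝ) : crossMin ω₁ p ≤ √p.1 :=
  (min_le_right _ _).trans (min_le_right _ _)

lemma jb_rpow_weight_nonneg (k ω₁ : ℝ) (p : ℝ × ℝ) :
    0 ≤ |jb ω₁ ^ k - jb p.2 ^ k| /
      (jb ω₁ ^ k * jb (p.1 + p.2 - ω₁) ^ k * jb p.1 ^ k * jb p.2 ^ k) := by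
  have := jb_rpow_pos ω₁ k; have := jb_rpow_pos p.1 k; have := jb_rpow_pos p.2 k
  have := jb_rpow_pos (p.1 + p.2 - ω₁) k
  positivity

lemma cprime234Integrand_nonneg {β M ω₁ : ℝ} {p : ℝ × ℝ} (hp : p ∈ Dom ω₁) :
    0 ≤ cprime234Integrand β M ω₁ p := by
  obtain ⟨hx, hxw, hsum⟩ := hp
  have hprod : 0 ≤ (p.1 + p.2 - ω₁) * p.1 * p.2 :=
    mul_nonneg (mul_nonneg (by linarith) hx) (hx.trans hxw)
  exact mul_nonneg (mul_nonneg (Real.rpow_nonneg hprod _) (crossMin_nonneg ω₁ p))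
    (jb_rpow_weight_nonneg _ ω₁ p)

lemma rpow_mul_crossMin_le {β ω₁ : ℝ} {p : ℝ × ℝ} (hβ0 : 0 ≤ β) (hβ1 : β ≤ 1) (hω₁ : 1 ≤ ω₁)
    (hp : p ∈ Dom ω₁) :
    ((p.1 + p.2 - ω₁) * p.1 * p.2) ^ β * crossMin ω₁ p ≤
      ω₁ ^ β * ((1 + p.1) ^ 2 * (1 + (p.1 + p.2 - ω₁)) ^ 2) := by
  obtain ⟨hx, hxw, hsum⟩ := hp
  set x := p.1
  set w := p.2
  set u := x + w - ω₁
  have hu : 0 ≤ u := by linarith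
  have hw0 : 0 ≤ w := hx.trans hxw
  have hw : w ≤ ω₁ * (1 + u) := by nlinarith
  have hsqrt : √x ≤ 1 + x := by
    rw [Real.sqrt_eq_rpow]; exact rpow_le_one_add hx (by norm_num) (by norm_num)
  have hsplit : (u * x * w) ^ β ≤ ω₁ ^ β * ((1 + u) ^ β * u ^ β) * x ^ β := by
    rw [Real.mul_rpow (by positivity) hw0, Real.mul_rpow hu hx]
    calc u ^ β * x ^ β * w ^ β ≤ u ^ β * x ^ β * (ω₁ * (1 + u)) ^ β := by gcongr
      _ = ω₁ ^ β * ((1 + u) ^ β * u ^ β) * x ^ β := by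
        rw [Real.mul_rpow (by linarith) (by linarith)]; ring
  calc (u * x * w) ^ β * crossMin ω₁ p
      ≤ ω₁ ^ β * ((1 + u) ^ β * u ^ β) * x ^ β * √x :=
        mul_le_mul hsplit (crossMin_le_sqrt_fst ω₁ p) (crossMin_nonneg ω₁ p) (by positivity)
    _ = ω₁ ^ β * ((1 + u) ^ β * u ^ β) * (x ^ β * √x) := by ring
    _ ≤ ω₁ ^ β * ((1 + u) * (1 + u)) * ((1 + x) * (1 + x)) := by
        gcongr
        · exact Real.rpow_le_self_of_one_le (by linarith) hβ1
        · exact rpow_le_one_add hu hβ0 hβ1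
        · exact rpow_le_one_add hx hβ0 hβ1
    _ = ω₁ ^ β * ((1 + x) ^ 2 * (1 + u) ^ 2) := by ring

lemma jb_rpow_weight_le {k ω₁ : ℝ} {p : ℝ × ℝ} (hk : 0 ≤ k) (hω₁ : 0 < ω₁) (hp : p ∈ Dom ω₁) :
    |jb ω₁ ^ k - jb p.2 ^ k| / (jb ω₁ ^ k * jb (p.1 + p.2 - ω₁) ^ k * jb p.1 ^ k * jb p.2 ^ k) ≤
      k * (ω₁ / 2) ^ (-(k + 1)) *
        (((1 + p.1) * jb p.1 ^ (-k)) * ((1 + (p.1 + p.2 - ω₁)) * jb (p.1 + p.2 - ω₁) ^ (-k))) := by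
  obtain ⟨hx, hxw, hsum⟩ := hp
  set x := p.1
  set w := p.2
  set u := x + w - ω₁
  have hJinv : ∀ t, (jb t ^ k)⁻¹ = jb t ^ (-k) := fun t => (Real.rpow_neg (jb_pos t).le k).symm
  have hratio : |jb ω₁ ^ k - jb w ^ k| / (jb ω₁ ^ k * jb u ^ k * jb x ^ k * jb w ^ k) =
      |jb ω₁ ^ (-k) - jb w ^ (-k)| * (jb x ^ (-k) * jb u ^ (-k)) := by
    rw [← hJinv, ← hJinv, ← hJinv, ← hJinv, inv_sub_inv (jb_rpow_pos _ _).ne' (jb_rpow_pos _ _).ne',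
      abs_div, abs_of_pos (mul_pos (jb_rpow_pos _ _) (jb_rpow_pos _ _)), abs_sub_comm]
    field_simp
  have hdiff : |jb ω₁ ^ (-k) - jb w ^ (-k)| ≤ k * (ω₁ / 2) ^ (-(k + 1)) * ((1 + x) * (1 + u)) := by
    refine (abs_jb_rpow_neg_sub_le hk (half_pos hω₁) (by linarith) (by linarith)).trans ?_
    refine mul_le_mul_of_nonneg_left ?_ (by positivity)
    rw [abs_le]; constructor <;> nlinarith
  calc |jb ω₁ ^ k - jb w ^ k| / (jb ω₁ ^ k * jb u ^ k * jb x ^ k * jb w ^ k)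
      ≤ k * (ω₁ / 2) ^ (-(k + 1)) * ((1 + x) * (1 + u)) * (jb x ^ (-k) * jb u ^ (-k)) := by
        rw [hratio]
        exact mul_le_mul_of_nonneg_right hdiff
          (mul_nonneg (jb_rpow_pos _ _).le (jb_rpow_pos _ _).le)
    _ = k * (ω₁ / 2) ^ (-(k + 1)) * (((1 + x) * jb x ^ (-k)) * ((1 + u) * jb u ^ (-k))) := by ring

lemma cprime234Integrand_le {β M ω₁ : ℝ} {p : ℝ × ℝ} (hβ0 : 0 ≤ β) (hβ1 : β ≤ 1) (hM : 10 ≤ M)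
    (hω₁ : 1 ≤ ω₁) (hp : p ∈ Dom ω₁) :
    cprime234Integrand β M ω₁ p ≤
      9 * M * 2 ^ (M / 2) * ω₁ ^ (β - 1 - M / 2) *
        ((1 + p.1 ^ 2)⁻¹ * (1 + (p.1 + p.2 - ω₁) ^ 2)⁻¹) := by
  have hω₁0 : 0 < ω₁ := by linarith
  have hx : 0 ≤ p.1 := hp.1
  have hu : 0 ≤ p.1 + p.2 - ω₁ := by linarith [hp.2.2]
  set x := p.1
  set u := p.1 + p.2 - ω₁
  set k := M / 2 with hk_def
  have hk5 : 5 ≤ k := by linarith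
  have hconst : k * (ω₁ / 2) ^ (-(k + 1)) * ω₁ ^ β = M * 2 ^ k * ω₁ ^ (β - 1 - k) := by
    rw [Real.div_rpow hω₁0.le zero_le_two, show β - 1 - k = -(k + 1) + β by ring,
      Real.rpow_add hω₁0, Real.rpow_neg zero_le_two, Real.rpow_add_one two_ne_zero, hk_def]
    field_simp
  calc cprime234Integrand β M ω₁ p
      ≤ ω₁ ^ β * ((1 + x) ^ 2 * (1 + u) ^ 2) *
          (k * (ω₁ / 2) ^ (-(k + 1)) * (((1 + x) * jb x ^ (-k)) * ((1 + u) * jb u ^ (-k)))) :=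
        mul_le_mul (rpow_mul_crossMin_le hβ0 hβ1 hω₁ hp)
          (jb_rpow_weight_le (by linarith) hω₁0 hp) (jb_rpow_weight_nonneg _ ω₁ p) (by positivity)
    _ = k * (ω₁ / 2) ^ (-(k + 1)) * ω₁ ^ β * ((1 + x) ^ 3 * jb x ^ (-k)) *
          ((1 + u) ^ 3 * jb u ^ (-k)) := by ring
    _ ≤ k * (ω₁ / 2) ^ (-(k + 1)) * ω₁ ^ β * (3 * (1 + x ^ 2)⁻¹) * (3 * (1 + u ^ 2)⁻¹) := by
        have := jb_rpow_pos u (-k)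
        gcongr _ * ?_ * ?_
        · exact one_add_pow_three_mul_jb_rpow_neg_le hx hk5
        · exact one_add_pow_three_mul_jb_rpow_neg_le hu hk5
    _ = 9 * M * 2 ^ k * ω₁ ^ (β - 1 - k) * ((1 + x ^ 2)⁻¹ * (1 + u ^ 2)⁻¹) := by
        rw [hconst]; ring

lemma integrable_inv_one_add_sq_mul_shift (c : ℝ) :
    Integrable (fun p : ℝ × ℝ => (1 + p.1 ^ 2)⁻¹ * (1 + (p.1 + p.2 - c) ^ 2)⁻¹) := by
  rw [Measure.volume_eq_prod]
  exact integrable_inv_one_add_sq.mul_comp_add_prod (integrable_inv_one_add_sq.comp_sub_right c)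

lemma integral_inv_one_add_sq_mul_shift (c : ℝ) :
    ∫ p : ℝ × ℝ, (1 + p.1 ^ 2)⁻¹ * (1 + (p.1 + p.2 - c) ^ 2)⁻¹ = π ^ 2 := by
  rw [Measure.volume_eq_prod]
  calc ∫ p : ℝ × ℝ, (1 + p.1 ^ 2)⁻¹ * (1 + (p.1 + p.2 - c) ^ 2)⁻¹ ∂(volume.prod volume)
      = (∫ x, (1 + x ^ 2)⁻¹) * ∫ y, (1 + (y - c) ^ 2)⁻¹ :=
        integral_mul_comp_add_prod (f := fun x => (1 + x ^ 2)⁻¹) (g := fun y => (1 + (y - c) ^ 2)⁻¹)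
    _ = π ^ 2 := by
      rw [integral_sub_right_eq_self (fun y => (1 + y ^ 2)⁻¹), integral_univ_inv_one_add_sq, sq]

lemma measurableSet_Dom (ω₁ : ℝ) : MeasurableSet (Dom ω₁) :=
  (measurableSet_le measurable_const measurable_fst).inter
    ((measurableSet_le measurable_fst measurable_snd).inter
      (measurableSet_le measurable_const (measurable_fst.add measurable_snd)))

lemma integral_cprime234Integrand_le {β M ω₁ : ℝ} (hβ0 : 0 ≤ β) (hβ1 : β ≤ 1) (hM : 10 ≤ M)
    (hω₁ : 1 ≤ ω₁) :
    ∫ p in Dom ω₁, cprime234Integrand β M ω₁ p ≤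
      9 * M * 2 ^ (M / 2) * ω₁ ^ (β - 1 - M / 2) * π ^ 2 := by
  set K := 9 * M * 2 ^ (M / 2) * ω₁ ^ (β - 1 - M / 2)
  have hM0 : 0 ≤ M := by linarith
  have hK : 0 ≤ K := by positivity
  have hG := (integrable_inv_one_add_sq_mul_shift ω₁).const_mul K
  calc ∫ p in Dom ω₁, cprime234Integrand β M ω₁ p
      ≤ ∫ p in Dom ω₁, K * ((1 + p.1 ^ 2)⁻¹ * (1 + (p.1 + p.2 - ω₁) ^ 2)⁻¹) :=
        integral_mono_of_nonneg
          (ae_restrict_of_forall_mem (measurableSet_Dom ω₁) fun _ hp => cprime234Integrand_nonneg hp)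
          hG.restrict
          (ae_restrict_of_forall_mem (measurableSet_Dom ω₁) fun _ hp =>
            cprime234Integrand_le hβ0 hβ1 hM hω₁ hp)
    _ ≤ ∫ p : ℝ × ℝ, K * ((1 + p.1 ^ 2)⁻¹ * (1 + (p.1 + p.2 - ω₁) ^ 2)⁻¹) :=
        setIntegral_le_integral hG (.of_forall fun _ => by positivity)
    _ = K * π ^ 2 := by rw [integral_const_mul, integral_inv_one_add_sq_mul_shift]

/-- Upper bound: C′²³⁴(ω₁) ≲ ω₁^{2β − 3/2 − M/2} for ω₁ > 1. -/
theorem Cprime234_upper_bound (β M : ℝ) (hβ0 : 0 ≤ β) (hβ1 : β ≤ 1) (hM : 10 < M) :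
    ∃ C : ℝ, 0 < C ∧ ∀ ω₁ : ℝ, 1 < ω₁ →
      Cprime234 β M ω₁ ≤ C * ω₁ ^ (2 * β - 3/2 - M / 2) := by
  have hM0 : 0 < M := by linarith
  refine ⟨64 * π ^ 3 * (9 * M * 2 ^ (M / 2)) * π ^ 2, by positivity, fun ω₁ hω₁ => ?_⟩
  have hω₁0 : 0 < ω₁ := by linarith
  calc Cprime234 β M ω₁
      = 64 * π ^ 3 * ω₁ ^ (β - 1/2) * ∫ p in Dom ω₁, cprime234Integrand β M ω₁ p :=
        Cprime234_eq_integral β M ω₁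
    _ ≤ 64 * π ^ 3 * ω₁ ^ (β - 1/2) * (9 * M * 2 ^ (M / 2) * ω₁ ^ (β - 1 - M / 2) * π ^ 2) := by
        gcongr
        exact integral_cprime234Integrand_le hβ0 hβ1 hM.le hω₁.le
    _ = 64 * π ^ 3 * (9 * M * 2 ^ (M / 2)) * π ^ 2 * ω₁ ^ (2 * β - 3/2 - M / 2) := by
        rw [show 2 * β - 3/2 - M / 2 = (β - 1/2) + (β - 1 - M / 2) by ring, Real.rpow_add hω₁0]
        ring
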